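/- For every real a > 0, the a-th power of the Jeffreys divergence between Poincaré distributions is not a metric on the symmetric positive-definite 2×2 matrices: there exist real 2×2 symmetric positive-definite matrices θ⁽¹⁾, θ⁽²⁾, θ⁽³⁾ such that D_J[p_{θ⁽¹⁾} : p_{θ⁽³⁾}]^a > D_J[p_{θ⁽¹⁾} : p_{θ⁽²⁾}]^a + D_J[p_{θ⁽²⁾} : p_{θ⁽³⁾}]^a, i.e. the triangle inequality fails. -/

import Mathlib

open MeasureTheory Matrix

/-- The Poincaré density on the upper half-plane, as a density on `ℝ × ℝ`
(vanishing for `y ≤ 0`), indexed by a 2×2 symmetric positive-definite matrix. -/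
noncomputable def poincareDensity (θ : Matrix (Fin 2) (Fin 2) ℝ) (z : ℝ × ℝ) : ℝ :=
  if 0 < z.2 then
    Real.sqrt θ.det * Real.exp (2 * Real.sqrt θ.det) / Real.pi *
      Real.exp (-(θ 0 0 * (z.1 ^ 2 + z.2 ^ 2) + 2 * θ 0 1 * z.1 + θ 1 1) / z.2) / z.2 ^ 2
  else 0

/-- The Kullback-Leibler divergence between two densities on the upper half-plane. -/
noncomputable def klH (p q : ℝ × ℝ → ℝ) : ℝ :=
  ∫ z in {w : ℝ × ℝ | 0 < w.2}, p z * Real.log (p z / q z)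

/-- The Jeffreys divergence (symmetrized KL divergence). -/
noncomputable def jeffreysH (p q : ℝ × ℝ → ℝ) : ℝ := klH p q + klH q p

/-!
For a scalar parameter `θ = s • 1` the Poincaré density is `exp (-s q) / (Z(s) y²)` with
`q = (x² + y² + 1) / y`. Integrating out `x` (a Gaussian integral) reduces both `Z(s)` and
`∫ q exp (-s q) / y²` to integrals `∫₀^∞ y^(-3/2) G(y + 1/y) dy`, which the Cauchy–Schlömilch
substitution `v = √y - 1/√y` turns back into Gaussian integrals: `Z(s) = π e^(-2s) / s` and the
mean of `q` is `2 + 1/s`. Hence `KL(s, t) = log (s / t) + t / s - 1`, and the Jeffreys divergence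
is `t / s + s / t - 2`. Along `1, r, r²` both short divergences equal `d = r + 1/r - 2`, while the
long one is `d (r + 2 + 1/r) > d r`; for `r = 2^(1/a)` the `a`-th powers violate the triangle
inequality.
-/

open Real Set

lemma integrable_sq_mul_exp_neg_mul_sq {b : ℝ} (hb : 0 < b) :
    Integrable fun x : ℝ => x ^ 2 * exp (-b * x ^ 2) := by
  simpa [rpow_two] using integrable_rpow_mul_exp_neg_mul_sq hb (s := 2) (by norm_num)

lemma integral_sq_mul_exp_neg_mul_sq {b : ℝ} (hb : 0 < b) :
    ∫ x : ℝ, x ^ 2 * exp (-b * x ^ 2) = √(π / b) / (2 * b) := by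
  have hderiv (x : ℝ) : HasDerivAt (fun x => x * exp (-b * x ^ 2))
      (exp (-b * x ^ 2) - 2 * b * (x ^ 2 * exp (-b * x ^ 2))) x := by
    refine ((hasDerivAt_id x).mul ((hasDerivAt_pow 2 x).const_mul (-b)).exp).congr_deriv ?_
    simp only [id, Nat.cast_ofNat]; ring
  have hsq := (integrable_sq_mul_exp_neg_mul_sq hb).const_mul (2 * b)
  have h := integral_eq_zero_of_hasDerivAt_of_integrable hderiv
    ((integrable_exp_neg_mul_sq hb).sub hsq) (integrable_mul_exp_neg_mul_sq hb)
  rw [integral_sub (integrable_exp_neg_mul_sq hb) hsq, integral_gaussian,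
    integral_const_mul] at h
  rw [eq_div_iff (by positivity)]
  linarith

lemma integrable_add_mul_sq_mul_exp_neg_mul_sq {b : ℝ} (hb : 0 < b) (α β : ℝ) :
    Integrable fun x : ℝ => (α + β * x ^ 2) * exp (-b * x ^ 2) := by
  simp_rw [add_mul, mul_assoc]
  exact ((integrable_exp_neg_mul_sq hb).const_mul α).add
    ((integrable_sq_mul_exp_neg_mul_sq hb).const_mul β)

lemma integral_add_mul_sq_mul_exp_neg_mul_sq {b : ℝ} (hb : 0 < b) (α β : ℝ) :
    ∫ x : ℝ, (α + β * x ^ 2) * exp (-b * x ^ 2) = √(π / b) * (α + β / (2 * b)) := by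
  simp_rw [add_mul, mul_assoc]
  rw [integral_add ((integrable_exp_neg_mul_sq hb).const_mul α)
      ((integrable_sq_mul_exp_neg_mul_sq hb).const_mul β),
    integral_const_mul, integral_const_mul, integral_gaussian, integral_sq_mul_exp_neg_mul_sq hb]
  ring

lemma exp_neg_mul_sq_add_two (s v : ℝ) :
    exp (-(s * (v ^ 2 + 2))) = exp (-(2 * s)) * exp (-s * v ^ 2) := by
  rw [← exp_add]; ring_nf

lemma sq_add_two_add_mul_exp_neg_mul_sq_add_two (s c v : ℝ) :
    (v ^ 2 + 2 + c) * exp (-(s * (v ^ 2 + 2))) =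
      exp (-(2 * s)) * ((2 + c + 1 * v ^ 2) * exp (-s * v ^ 2)) := by
  rw [exp_neg_mul_sq_add_two]; ring

lemma integrable_exp_neg_mul_sq_add_two {s : ℝ} (hs : 0 < s) :
    Integrable fun v : ℝ => exp (-(s * (v ^ 2 + 2))) := by
  simp_rw [exp_neg_mul_sq_add_two]
  exact (integrable_exp_neg_mul_sq hs).const_mul _

lemma integral_exp_neg_mul_sq_add_two (s : ℝ) :
    ∫ v : ℝ, exp (-(s * (v ^ 2 + 2))) = exp (-(2 * s)) * √(π / s) := by
  simp_rw [exp_neg_mul_sq_add_two]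
  rw [integral_const_mul, integral_gaussian]

lemma integrable_sq_add_two_add_mul_exp_neg_mul_sq_add_two {s : ℝ} (hs : 0 < s) (c : ℝ) :
    Integrable fun v : ℝ => (v ^ 2 + 2 + c) * exp (-(s * (v ^ 2 + 2))) := by
  simp_rw [sq_add_two_add_mul_exp_neg_mul_sq_add_two]
  exact (integrable_add_mul_sq_mul_exp_neg_mul_sq hs _ _).const_mul _

lemma integral_sq_add_two_add_mul_exp_neg_mul_sq_add_two {s : ℝ} (hs : 0 < s) (c : ℝ) :
    ∫ v : ℝ, (v ^ 2 + 2 + c) * exp (-(s * (v ^ 2 + 2))) =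
      exp (-(2 * s)) * √(π / s) * (2 + c + (2 * s)⁻¹) := by
  simp_rw [sq_add_two_add_mul_exp_neg_mul_sq_add_two]
  rw [integral_const_mul, integral_add_mul_sq_mul_exp_neg_mul_sq hs]
  ring

lemma sq_sqrt_sub_inv_sqrt_add_two {y : ℝ} (hy : 0 < y) : (√y - (√y)⁻¹) ^ 2 + 2 = y + y⁻¹ := by
  have h := sq_sqrt hy.le
  have : √y ≠ 0 := by positivity
  field_simp
  rw [h]
  ring

lemma hasDerivAt_sqrt_sub_inv_sqrt {y : ℝ} (hy : 0 < y) :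
    HasDerivAt (fun y => √y - (√y)⁻¹) (((√y)⁻¹ + (y * √y)⁻¹) / 2) y := by
  have hsqrt := hasDerivAt_sqrt hy.ne'
  refine (hsqrt.sub (hsqrt.inv (by positivity))).congr_deriv ?_
  rw [sq_sqrt hy.le]
  field_simp
  ring

lemma strictMonoOn_sqrt_sub_inv_sqrt : StrictMonoOn (fun y => √y - (√y)⁻¹) (Ioi 0) := by
  intro x hx y hy hxy
  have hlt : √x < √y := sqrt_lt_sqrt (le_of_lt hx) hxy
  have := inv_strictAnti₀ (sqrt_pos.2 (show (0:ℝ) < x from hx)) hlt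
  dsimp only
  linarith

lemma image_sqrt_sub_inv_sqrt_Ioi : (fun y => √y - (√y)⁻¹) '' Ioi 0 = univ := by
  refine eq_univ_of_forall fun v => ?_
  -- `t` is the positive root of `t ^ 2 - v * t - 1`, so that `t - t⁻¹ = v`
  set t := (v + √(v ^ 2 + 4)) / 2 with ht_def
  have hroot : √(v ^ 2 + 4) ^ 2 = v ^ 2 + 4 := sq_sqrt (by positivity)
  have hv : |v| < √(v ^ 2 + 4) := (lt_sqrt (abs_nonneg v)).2 (by rw [sq_abs]; linarith)
  have ht : 0 < t := by rw [ht_def]; linarith [neg_abs_le v]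
  refine ⟨t ^ 2, pow_pos ht 2, ?_⟩
  dsimp only
  rw [sqrt_sq ht.le]
  field_simp
  rw [ht_def]
  nlinarith

lemma setIntegral_comp_sqrt_sub_inv_sqrt_eq (g : ℝ → ℝ) :
    ∫ y in Ioi 0, ((√y)⁻¹ + (y * √y)⁻¹) / 2 * g (√y - (√y)⁻¹) = ∫ v, g v := by
  have h := integral_image_eq_integral_abs_deriv_smul measurableSet_Ioi
    (fun y hy => (hasDerivAt_sqrt_sub_inv_sqrt hy).hasDerivWithinAt)
    strictMonoOn_sqrt_sub_inv_sqrt.injOn g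
  rw [image_sqrt_sub_inv_sqrt_Ioi, setIntegral_univ] at h
  rw [h]
  refine setIntegral_congr_fun measurableSet_Ioi fun y (hy : 0 < y) => ?_
  rw [smul_eq_mul, abs_of_nonneg (by positivity)]

lemma integrableOn_comp_sqrt_sub_inv_sqrt_iff (g : ℝ → ℝ) :
    IntegrableOn (fun y => ((√y)⁻¹ + (y * √y)⁻¹) / 2 * g (√y - (√y)⁻¹)) (Ioi 0) ↔
      Integrable g := by
  rw [← integrableOn_univ, ← image_sqrt_sub_inv_sqrt_Ioi,
    integrableOn_image_iff_integrableOn_abs_deriv_smul measurableSet_Ioi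
      (fun y hy => (hasDerivAt_sqrt_sub_inv_sqrt hy).hasDerivWithinAt)
      strictMonoOn_sqrt_sub_inv_sqrt.injOn]
  refine integrableOn_congr_fun (fun y (hy : 0 < y) => ?_) measurableSet_Ioi
  rw [smul_eq_mul, abs_of_nonneg (by positivity)]

lemma setIntegral_inv_sqrt_mul_comp_add_inv (G : ℝ → ℝ) :
    ∫ y in Ioi 0, (√y)⁻¹ * G (y + y⁻¹) = ∫ y in Ioi 0, (y * √y)⁻¹ * G (y + y⁻¹) := by
  rw [← integral_comp_rpow_Ioi _ (neg_ne_zero.2 one_ne_zero)]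
  refine setIntegral_congr_fun measurableSet_Ioi fun y (hy : 0 < y) => ?_
  have hsq : y ^ (-1 - 1 : ℝ) = (y ^ 2)⁻¹ := by
    rw [show (-1 - 1 : ℝ) = -2 by norm_num, rpow_neg hy.le, rpow_two]
  have hy' : √y ≠ 0 := by positivity
  rw [smul_eq_mul, hsq, rpow_neg_one, sqrt_inv, inv_inv, inv_inv, add_comm y⁻¹]
  field_simp
  rw [sq_sqrt hy.le]
  ring

lemma integrableOn_mul_comp_add_inv {G : ℝ → ℝ} (hG : Integrable fun v => G (v ^ 2 + 2)) :
    IntegrableOn (fun y => (y * √y)⁻¹ * G (y + y⁻¹)) (Ioi 0) := by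
  have h := (integrableOn_comp_sqrt_sub_inv_sqrt_iff _).2 hG
  have hbdd : IntegrableOn (fun y => (2 * (1 + y)⁻¹) * (((√y)⁻¹ + (y * √y)⁻¹) / 2 *
      G ((√y - (√y)⁻¹) ^ 2 + 2))) (Ioi 0) := by
    refine h.bdd_mul (c := 2) (by fun_prop) ?_
    filter_upwards [ae_restrict_mem measurableSet_Ioi] with y (hy : 0 < y)
    rw [norm_of_nonneg (by positivity)]
    have : (1 + y)⁻¹ ≤ 1 := inv_le_one_of_one_le₀ (by linarith)
    linarith
  refine hbdd.congr_fun (fun y (hy : 0 < y) => ?_) measurableSet_Ioi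
  have hy' : √y ≠ 0 := by positivity
  dsimp only
  rw [sq_sqrt_sub_inv_sqrt_add_two hy]
  field_simp
  ring

/-- Cauchy–Schlömilch: symmetrize under `y ↦ y⁻¹`, then substitute `v = √y - 1 / √y`. -/
lemma setIntegral_mul_comp_add_inv {G : ℝ → ℝ} (hG : Integrable fun v => G (v ^ 2 + 2)) :
    ∫ y in Ioi 0, (y * √y)⁻¹ * G (y + y⁻¹) = ∫ v, G (v ^ 2 + 2) := by
  have h := (integrableOn_comp_sqrt_sub_inv_sqrt_iff _).2 hG
  have h₃ := integrableOn_mul_comp_add_inv hG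
  have h₁ : IntegrableOn (fun y => (√y)⁻¹ * G (y + y⁻¹)) (Ioi 0) := by
    refine IntegrableOn.congr_fun ((h.const_mul 2).sub h₃) (fun y (hy : 0 < y) => ?_)
      measurableSet_Ioi
    simp only [Pi.sub_apply, sq_sqrt_sub_inv_sqrt_add_two hy]
    ring
  rw [← setIntegral_comp_sqrt_sub_inv_sqrt_eq]
  calc ∫ y in Ioi 0, (y * √y)⁻¹ * G (y + y⁻¹)
      = ((∫ y in Ioi 0, (√y)⁻¹ * G (y + y⁻¹)) + ∫ y in Ioi 0, (y * √y)⁻¹ * G (y + y⁻¹)) / 2 := by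
        rw [setIntegral_inv_sqrt_mul_comp_add_inv]; ring
    _ = _ := by
        rw [← integral_add h₁ h₃, ← integral_div]
        refine setIntegral_congr_fun measurableSet_Ioi fun y (hy : 0 < y) => ?_
        simp only [sq_sqrt_sub_inv_sqrt_add_two hy]
        ring

section HalfPlane

variable {f : ℝ × ℝ → ℝ} {F : ℝ → ℝ}

lemma volume_restrict_upperHalfPlane :
    volume.restrict {z : ℝ × ℝ | 0 < z.2} = volume.prod (volume.restrict (Ioi (0 : ℝ))) := by
  rw [show {z : ℝ × ℝ | 0 < z.2} = univ ×ˢ Ioi 0 by ext; simp, Measure.volume_eq_prod,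
    ← Measure.prod_restrict, Measure.restrict_univ]

lemma integrableOn_upperHalfPlane_of_slices (hf : Measurable f)
    (hf₀ : ∀ x, ∀ y > 0, 0 ≤ f (x, y)) (hslice : ∀ y > 0, Integrable fun x => f (x, y))
    (hF : ∀ y > 0, ∫ x, f (x, y) = F y) (hFint : IntegrableOn F (Ioi 0)) :
    IntegrableOn f {z | 0 < z.2} := by
  rw [IntegrableOn, volume_restrict_upperHalfPlane, integrable_prod_iff' hf.aestronglyMeasurable]
  refine ⟨ae_restrict_of_forall_mem measurableSet_Ioi hslice, hFint.congr_fun (fun y hy => ?_)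
    measurableSet_Ioi⟩
  rw [← hF y hy]
  exact integral_congr_ae (ae_of_all _ fun x => (norm_of_nonneg (hf₀ x y hy)).symm)

lemma setIntegral_upperHalfPlane_of_slices (hf : Measurable f)
    (hf₀ : ∀ x, ∀ y > 0, 0 ≤ f (x, y)) (hslice : ∀ y > 0, Integrable fun x => f (x, y))
    (hF : ∀ y > 0, ∫ x, f (x, y) = F y) (hFint : IntegrableOn F (Ioi 0)) :
    ∫ z in {z | 0 < z.2}, f z = ∫ y in Ioi 0, F y := by
  have hint := integrableOn_upperHalfPlane_of_slices hf hf₀ hslice hF hFint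
  rw [IntegrableOn, volume_restrict_upperHalfPlane] at hint
  rw [volume_restrict_upperHalfPlane, integral_prod_symm _ hint]
  exact setIntegral_congr_fun measurableSet_Ioi hF

end HalfPlane

/-- Twice the hyperbolic cosine of the distance from `z` to `i`. -/
noncomputable def poincareStat (z : ℝ × ℝ) : ℝ := (z.1 ^ 2 + z.2 ^ 2 + 1) / z.2

noncomputable def poincareWeight (s : ℝ) (z : ℝ × ℝ) : ℝ := exp (-(s * poincareStat z)) / z.2 ^ 2

noncomputable def poincareNormalizer (s : ℝ) : ℝ := π * exp (-(2 * s)) / s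

section Poincare

variable {s y : ℝ}

lemma poincareStat_mk (x : ℝ) (hy : 0 < y) : poincareStat (x, y) = y + y⁻¹ + y⁻¹ * x ^ 2 := by
  simp only [poincareStat]
  field_simp
  ring

lemma poincareWeight_mk (x : ℝ) (hy : 0 < y) :
    poincareWeight s (x, y) = exp (-(s / y) * x ^ 2) * (exp (-(s * (y + y⁻¹))) / y ^ 2) := by
  rw [poincareWeight, poincareStat_mk x hy, mul_div_assoc', ← exp_add]
  congr 2
  ring

lemma sqrt_div_div_div_sq (a : ℝ) (hy : 0 < y) :
    √(a / (s / y)) / y ^ 2 = √(a / s) * (y * √y)⁻¹ := by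
  have hy' : √y ≠ 0 := by positivity
  rw [div_div_eq_mul_div, mul_div_right_comm, sqrt_mul' _ hy.le]
  field_simp
  rw [sq_sqrt hy.le]

lemma integral_poincareWeight_slice (hy : 0 < y) :
    ∫ x, poincareWeight s (x, y) = √(π / s) * ((y * √y)⁻¹ * exp (-(s * (y + y⁻¹)))) := by
  simp_rw [poincareWeight_mk _ hy]
  rw [integral_mul_const, integral_gaussian, ← mul_assoc, ← sqrt_div_div_div_sq π hy]
  ring

lemma integral_poincareStat_mul_poincareWeight_slice (hs : 0 < s) (hy : 0 < y) :
    ∫ x, poincareStat (x, y) * poincareWeight s (x, y) =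
      √(π / s) * ((y * √y)⁻¹ * ((y + y⁻¹ + (2 * s)⁻¹) * exp (-(s * (y + y⁻¹))))) := by
  simp_rw [poincareWeight_mk _ hy, poincareStat_mk _ hy, ← mul_assoc]
  rw [integral_mul_const, integral_add_mul_sq_mul_exp_neg_mul_sq (by positivity),
    ← sqrt_div_div_div_sq π hy]
  field_simp

lemma integrable_poincareWeight_slice (hs : 0 < s) (hy : 0 < y) :
    Integrable fun x => poincareWeight s (x, y) := by
  simp_rw [poincareWeight_mk _ hy]
  exact (integrable_exp_neg_mul_sq (by positivity)).mul_const _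

lemma integrable_poincareStat_mul_poincareWeight_slice (hs : 0 < s) (hy : 0 < y) :
    Integrable fun x => poincareStat (x, y) * poincareWeight s (x, y) := by
  simp_rw [poincareWeight_mk _ hy, poincareStat_mk _ hy, ← mul_assoc]
  exact (integrable_add_mul_sq_mul_exp_neg_mul_sq (by positivity) _ _).mul_const _

lemma measurable_poincareWeight (s : ℝ) : Measurable (poincareWeight s) := by
  unfold poincareWeight poincareStat; fun_prop

lemma measurable_poincareStat_mul_poincareWeight (s : ℝ) :
    Measurable fun z => poincareStat z * poincareWeight s z := by
  unfold poincareWeight poincareStat; fun_prop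

lemma poincareWeight_nonneg (s : ℝ) (z : ℝ × ℝ) : 0 ≤ poincareWeight s z := by
  unfold poincareWeight; positivity

lemma poincareStat_nonneg {z : ℝ × ℝ} (hz : 0 < z.2) : 0 ≤ poincareStat z := by
  unfold poincareStat; positivity

lemma integrableOn_poincareWeight (hs : 0 < s) :
    IntegrableOn (poincareWeight s) {z | 0 < z.2} :=
  integrableOn_upperHalfPlane_of_slices (measurable_poincareWeight s)
    (fun _ _ _ => poincareWeight_nonneg s _) (fun _ hy => integrable_poincareWeight_slice hs hy)
    (fun _ hy => integral_poincareWeight_slice hy)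
    ((integrableOn_mul_comp_add_inv (G := fun w => exp (-(s * w)))
      (integrable_exp_neg_mul_sq_add_two hs)).const_mul _)

lemma integral_poincareWeight (hs : 0 < s) :
    ∫ z in {z | 0 < z.2}, poincareWeight s z = poincareNormalizer s := by
  have hG := integrable_exp_neg_mul_sq_add_two hs
  rw [setIntegral_upperHalfPlane_of_slices (measurable_poincareWeight s)
    (fun _ _ _ => poincareWeight_nonneg s _) (fun _ hy => integrable_poincareWeight_slice hs hy)
    (fun _ hy => integral_poincareWeight_slice hy)
    ((integrableOn_mul_comp_add_inv (G := fun w => exp (-(s * w))) hG).const_mul _),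
    integral_const_mul, setIntegral_mul_comp_add_inv (G := fun w => exp (-(s * w))) hG,
    integral_exp_neg_mul_sq_add_two, poincareNormalizer]
  linear_combination exp (-(2 * s)) * mul_self_sqrt (show 0 ≤ π / s by positivity)

lemma integrableOn_poincareStat_mul_poincareWeight (hs : 0 < s) :
    IntegrableOn (fun z => poincareStat z * poincareWeight s z) {z | 0 < z.2} :=
  integrableOn_upperHalfPlane_of_slices (measurable_poincareStat_mul_poincareWeight s)
    (fun _ _ hy => mul_nonneg (poincareStat_nonneg hy) (poincareWeight_nonneg s _))
    (fun _ hy => integrable_poincareStat_mul_poincareWeight_slice hs hy)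
    (fun _ hy => integral_poincareStat_mul_poincareWeight_slice hs hy)
    ((integrableOn_mul_comp_add_inv (G := fun w => (w + (2 * s)⁻¹) * exp (-(s * w)))
      (integrable_sq_add_two_add_mul_exp_neg_mul_sq_add_two hs _)).const_mul _)

lemma integral_poincareStat_mul_poincareWeight (hs : 0 < s) :
    ∫ z in {z | 0 < z.2}, poincareStat z * poincareWeight s z =
      poincareNormalizer s * (2 + s⁻¹) := by
  have hG := integrable_sq_add_two_add_mul_exp_neg_mul_sq_add_two hs (2 * s)⁻¹
  rw [setIntegral_upperHalfPlane_of_slices (measurable_poincareStat_mul_poincareWeight s)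
    (fun _ _ hy => mul_nonneg (poincareStat_nonneg hy) (poincareWeight_nonneg s _))
    (fun _ hy => integrable_poincareStat_mul_poincareWeight_slice hs hy)
    (fun _ hy => integral_poincareStat_mul_poincareWeight_slice hs hy)
    ((integrableOn_mul_comp_add_inv (G := fun w => (w + (2 * s)⁻¹) * exp (-(s * w))) hG).const_mul
      _),
    integral_const_mul,
    setIntegral_mul_comp_add_inv (G := fun w => (w + (2 * s)⁻¹) * exp (-(s * w))) hG,
    integral_sq_add_two_add_mul_exp_neg_mul_sq_add_two hs, poincareNormalizer]
  linear_combination exp (-(2 * s)) * (2 + s⁻¹) * mul_self_sqrt (show 0 ≤ π / s by positivity)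

end Poincare

section Divergence

variable {s t : ℝ}

lemma poincareDensity_diagonal (hs : 0 < s) {z : ℝ × ℝ} (hz : 0 < z.2) :
    poincareDensity (diagonal fun _ => s) z = poincareWeight s z / poincareNormalizer s := by
  have hdet : √(diagonal fun _ : Fin 2 => s).det = s := by
    rw [det_diagonal, Fin.prod_univ_two, sqrt_mul_self hs.le]
  rw [poincareDensity, if_pos hz, hdet, poincareNormalizer, Real.exp_neg]
  simp only [poincareWeight, poincareStat, diagonal_apply_eq, ne_eq, zero_ne_one,
    not_false_eq_true, diagonal_apply_ne]
  field_simp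
  ring_nf

lemma poincareWeight_div_poincareWeight {z : ℝ × ℝ} (hz : 0 < z.2) :
    poincareWeight s z / poincareWeight t z = exp ((t - s) * poincareStat z) := by
  rw [poincareWeight, poincareWeight, div_div_div_cancel_right₀ (by positivity), ← exp_sub]
  ring_nf

lemma klH_poincareDensity_diagonal (hs : 0 < s) (ht : 0 < t) :
    klH (poincareDensity (diagonal fun _ => s)) (poincareDensity (diagonal fun _ => t)) =
      log s - log t + t / s - 1 := by
  have hZs : 0 < poincareNormalizer s := by unfold poincareNormalizer; positivity
  have hZt : 0 < poincareNormalizer t := by unfold poincareNormalizer; positivity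
  have hintegrand : ∀ z ∈ {z : ℝ × ℝ | 0 < z.2},
      poincareDensity (diagonal fun _ => s) z *
          log (poincareDensity (diagonal fun _ => s) z / poincareDensity (diagonal fun _ => t) z) =
        log (poincareNormalizer t / poincareNormalizer s) / poincareNormalizer s *
            poincareWeight s z + (t - s) / poincareNormalizer s * (poincareStat z * poincareWeight s z) := by
    intro z (hz : 0 < z.2)
    have hwt : 0 < poincareWeight t z := by unfold poincareWeight; positivity
    have hratio : poincareWeight s z / poincareNormalizer s /
        (poincareWeight t z / poincareNormalizer t) = poincareNormalizer t / poincareNormalizer s * exp ((t - s) * poincareStat z) := by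
      rw [← poincareWeight_div_poincareWeight hz]
      field_simp
    rw [poincareDensity_diagonal hs hz, poincareDensity_diagonal ht hz, hratio,
      log_mul (by positivity) (by positivity), log_exp]
    ring
  have hZ : poincareNormalizer t / poincareNormalizer s = s / t * exp (2 * s - 2 * t) := by
    simp only [poincareNormalizer, exp_sub, Real.exp_neg]
    field_simp
  rw [klH, setIntegral_congr_fun (measurableSet_lt measurable_const measurable_snd) hintegrand,
    integral_add ((integrableOn_poincareWeight hs).const_mul _)
      ((integrableOn_poincareStat_mul_poincareWeight hs).const_mul _),
    integral_const_mul, integral_const_mul, integral_poincareWeight hs,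
    integral_poincareStat_mul_poincareWeight hs, hZ, log_mul (by positivity) (by positivity),
    log_exp, log_div hs.ne' ht.ne']
  field_simp
  ring

lemma jeffreysH_poincareDensity_diagonal (hs : 0 < s) (ht : 0 < t) :
    jeffreysH (poincareDensity (diagonal fun _ => s)) (poincareDensity (diagonal fun _ => t)) =
      t / s + s / t - 2 := by
  rw [jeffreysH, klH_poincareDensity_diagonal hs ht, klH_poincareDensity_diagonal ht hs]
  ring

end Divergence

lemma rpow_add_rpow_lt_mul_rpow {a d m : ℝ} (ha : 0 < a) (hd : 0 < d) (hm : 2 ^ a⁻¹ < m) :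
    d ^ a + d ^ a < (d * m) ^ a := by
  have hm₀ : 0 < m := lt_trans (by positivity) hm
  have h2 : 2 < m ^ a := by
    calc (2 : ℝ) = (2 ^ a⁻¹) ^ a := by rw [← rpow_mul zero_le_two, inv_mul_cancel₀ ha.ne', rpow_one]
      _ < m ^ a := rpow_lt_rpow (by positivity) hm ha
  rw [mul_rpow hd.le hm₀.le]
  nlinarith [rpow_pos_of_pos hd a]

/-- for every a > 0, the a-th power of the Jeffreys divergence between
Poincaré distributions fails the triangle inequality, hence is not a metric. -/
theorem jeffreys_power_not_metric (a : ℝ) (ha : 0 < a) :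
    ∃ θ₁ θ₂ θ₃ : Matrix (Fin 2) (Fin 2) ℝ, θ₁.PosDef ∧ θ₂.PosDef ∧ θ₃.PosDef ∧
      jeffreysH (poincareDensity θ₁) (poincareDensity θ₂) ^ a +
          jeffreysH (poincareDensity θ₂) (poincareDensity θ₃) ^ a <
        jeffreysH (poincareDensity θ₁) (poincareDensity θ₃) ^ a := by
  set r : ℝ := 2 ^ a⁻¹
  have hr : 1 < r := one_lt_rpow (by norm_num) (inv_pos.2 ha)
  have hr₀ : 0 < r := by positivity
  refine ⟨diagonal fun _ => 1, diagonal fun _ => r, diagonal fun _ => r ^ 2,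
    PosDef.diagonal fun _ => one_pos, PosDef.diagonal fun _ => hr₀,
    PosDef.diagonal fun _ => pow_pos hr₀ 2, ?_⟩
  rw [jeffreysH_poincareDensity_diagonal one_pos hr₀,
    jeffreysH_poincareDensity_diagonal hr₀ (pow_pos hr₀ 2),
    jeffreysH_poincareDensity_diagonal one_pos (pow_pos hr₀ 2)]
  have hshort : r ^ 2 / r + r / r ^ 2 - 2 = r / 1 + 1 / r - 2 := by field_simp
  have hlong : r ^ 2 / 1 + 1 / r ^ 2 - 2 = (r / 1 + 1 / r - 2) * (r + 2 + r⁻¹) := by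
    field_simp; ring
  have hd : 0 < r / 1 + 1 / r - 2 := by
    rw [show r / 1 + 1 / r - 2 = (r - 1) ^ 2 / r by field_simp; ring]
    exact div_pos (pow_pos (by linarith) 2) hr₀
  rw [hshort, hlong]
  exact rpow_add_rpow_lt_mul_rpow ha hd (by linarith [inv_pos.2 hr₀])
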